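/- Let Ω = {ω_1, ω_2, ω_3, ω_4} and let X: Ω → ℝ be given by X = (0, 1, 2, 3). Let Π_1 be the partition {{ω_1, ω_3}, {ω_2, ω_4}} and Π_2 the partition {{ω_1, ω_4}, {ω_2, ω_3}}, and let μ = (1/8, 3/8, 3/8, 1/8). Then Π = (Π_1, Π_2) has the fine-join property, E_μ[X | P] = 3/2 for every cell P of Π_1 and of Π_2, and X is non-separable at μ under Π with value 3/2. In particular, an injective security can be non-separable under an information structure with the fine-join property. -/

import Mathlib

noncomputable section
open scoped Classical
open Finset

/-- A partition of `Ω` given by its cell map: `C ω` is the cell containing `ω`. -/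
def IsPartitionFun {Ω : Type*} (C : Ω → Set Ω) : Prop :=
  (∀ ω, ω ∈ C ω) ∧ ∀ ω ω', ω' ∈ C ω → C ω' = C ω

/-- The fine-join property: the intersection of all traders' cells at `ω` is `{ω}`. -/
def FineJoin {Ω : Type*} {n : ℕ} (C : Fin n → Ω → Set Ω) : Prop :=
  ∀ ω ω', (∀ i, ω' ∈ C i ω) → ω' = ω

/-- A prior: a probability distribution on the finite state space. -/
def IsPrior {Ω : Type*} [Fintype Ω] (μ : Ω → ℝ) : Prop :=
  (∀ ω, 0 ≤ μ ω) ∧ ∑ ω, μ ω = 1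

/-- Support of a prior. -/
def suppSet {Ω : Type*} (μ : Ω → ℝ) : Set Ω := {ω | 0 < μ ω}

/-- Conditional expectation `E_μ[X | S]`. -/
def condExp {Ω : Type*} [Fintype Ω] (μ X : Ω → ℝ) (S : Set Ω) : ℝ :=
  (∑ ω, if ω ∈ S then μ ω * X ω else 0) / (∑ ω, if ω ∈ S then μ ω else 0)

/-- `X` is non-separable at prior `μ` with value `v` under the information structure `C`. -/
def NonSeparableAt {Ω : Type*} [Fintype Ω] {n : ℕ}
    (C : Fin n → Ω → Set Ω) (X μ : Ω → ℝ) (v : ℝ) : Prop :=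
  (∃ ω ∈ suppSet μ, X ω ≠ v) ∧
  ∀ (i : Fin n) (ω : Ω), ω ∈ suppSet μ → condExp μ X (C i ω) = v

/-- `X` is separable under the information structure `C`. -/
def SeparableSec {Ω : Type*} [Fintype Ω] {n : ℕ}
    (C : Fin n → Ω → Set Ω) (X : Ω → ℝ) : Prop :=
  ¬ ∃ (μ : Ω → ℝ) (v : ℝ), IsPrior μ ∧ NonSeparableAt C X μ v

/-- Arrow–Debreu security: pays `a` at one state, `b ≠ a` at all other states. -/
def ArrowDebreu {Ω : Type*} (X : Ω → ℝ) : Prop :=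
  ∃ (a b : ℝ) (ωs : Ω), a ≠ b ∧ X ωs = a ∧ ∀ ω, ω ≠ ωs → X ω = b

/-- Three-value form: pays `a < b < d` with `a` at one state, `d` at another, `b` elsewhere. -/
def ThreeValueForm {Ω : Type*} (X : Ω → ℝ) : Prop :=
  ∃ (a b d : ℝ) (ωa ωd : Ω), a < b ∧ b < d ∧ ωa ≠ ωd ∧
    X ωa = a ∧ X ωd = d ∧ ∀ ω, ω ≠ ωa → ω ≠ ωd → X ω = b

/-- The security `(0, 1, 2, 3)` on four states. -/
def X11 : Fin 4 → ℝ := ![0, 1, 2, 3]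

/-- Trader 1's partition `{{ω1, ω3}, {ω2, ω4}}` and
trader 2's partition `{{ω1, ω4}, {ω2, ω3}}`, as cell maps. -/
def C11 : Fin 2 → Fin 4 → Set (Fin 4) :=
  ![fun ω => if ω = 0 ∨ ω = 2 then ({0, 2} : Set (Fin 4)) else {1, 3},
    fun ω => if ω = 0 ∨ ω = 3 then ({0, 3} : Set (Fin 4)) else {1, 2}]

/-- The prior `(1/8, 3/8, 3/8, 1/8)`. -/
def μ11 : Fin 4 → ℝ := ![1 / 8, 3 / 8, 3 / 8, 1 / 8]

/-!
Every cell of either partition is a pair of states, so the conditional expectation on it is a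
two-point weighted average; the weights `1/8, 3/8` make all four averages equal `3/2`. Trader 1
learns the parity of the state's index and trader 2 whether it lies in `{ω₁, ω₄}`; together these
single out every state.
-/

def binaryPartition {Ω : Type*} (S : Set Ω) (ω : Ω) : Set Ω :=
  if ω ∈ S then S else Sᶜ

lemma isPartitionFun_binaryPartition {Ω : Type*} (S : Set Ω) :
    IsPartitionFun (binaryPartition S) := by
  refine ⟨fun ω => ?_, fun ω ω' h => ?_⟩
  · unfold binaryPartition
    split_ifs with hω
    exacts [hω, hω]
  · unfold binaryPartition at h ⊢
    by_cases hω : ω ∈ S <;> simp_all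

lemma condExp_binaryPartition {Ω : Type*} [Fintype Ω] {μ X : Ω → ℝ} {S : Set Ω} {v : ℝ}
    (hS : condExp μ X S = v) (hSc : condExp μ X Sᶜ = v) (ω : Ω) :
    condExp μ X (binaryPartition S ω) = v := by
  unfold binaryPartition
  split_ifs
  exacts [hS, hSc]

lemma condExp_coe_finset {Ω : Type*} [Fintype Ω] (μ X : Ω → ℝ) (s : Finset Ω) :
    condExp μ X s = (∑ ω ∈ s, μ ω * X ω) / ∑ ω ∈ s, μ ω := by
  simp [condExp, Finset.sum_ite_mem]

lemma condExp_pair {Ω : Type*} [Fintype Ω] (μ X : Ω → ℝ) {a b : Ω} (hab : a ≠ b) :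
    condExp μ X {a, b} = (μ a * X a + μ b * X b) / (μ a + μ b) := by
  rw [← Finset.coe_pair, condExp_coe_finset, Finset.sum_pair hab, Finset.sum_pair hab]

lemma nonSeparableAt_of_forall_condExp_eq {Ω : Type*} [Fintype Ω] {n : ℕ}
    {C : Fin n → Ω → Set Ω} {X μ : Ω → ℝ} {v : ℝ} {ω₀ : Ω}
    (hω₀ : ω₀ ∈ suppSet μ) (hX : X ω₀ ≠ v) (h : ∀ i ω, condExp μ X (C i ω) = v) :
    NonSeparableAt C X μ v :=
  ⟨⟨ω₀, hω₀, hX⟩, fun i ω _ => h i ω⟩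

lemma C11_eq_binaryPartition :
    C11 = ![binaryPartition {0, 2}, binaryPartition {0, 3}] := by
  ext i ω x
  fin_cases i <;> fin_cases ω <;> fin_cases x <;> simp [C11, binaryPartition]

lemma fineJoin_C11 : FineJoin C11 := by
  intro ω ω' h
  have h0 := h 0
  have h1 := h 1
  fin_cases ω <;> fin_cases ω' <;> simp_all [C11]

lemma isPrior_μ11 : IsPrior μ11 := by
  refine ⟨fun ω => ?_, ?_⟩
  · fin_cases ω <;> norm_num [μ11]
  · norm_num [Fin.sum_univ_four, μ11, Matrix.cons_val_two, Matrix.cons_val_three]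

lemma strictMono_X11 : StrictMono X11 := by
  refine Fin.strictMono_iff_lt_succ.mpr fun i => ?_
  fin_cases i <;> norm_num [X11, Matrix.cons_val_two, Matrix.cons_val_three]

lemma condExp_C11 (i : Fin 2) (ω : Fin 4) : condExp μ11 X11 (C11 i ω) = 3 / 2 := by
  have compl02 : ({0, 2} : Set (Fin 4))ᶜ = {1, 3} := by ext x; fin_cases x <;> simp
  have compl03 : ({0, 3} : Set (Fin 4))ᶜ = {1, 2} := by ext x; fin_cases x <;> simp
  rw [C11_eq_binaryPartition]
  fin_cases i
  · refine condExp_binaryPartition ?_ (compl02 ▸ ?_) ω <;> rw [condExp_pair _ _ (by decide)] <;>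
      norm_num [μ11, X11, Matrix.cons_val_two, Matrix.cons_val_three]
  · refine condExp_binaryPartition ?_ (compl03 ▸ ?_) ω <;> rw [condExp_pair _ _ (by decide)] <;>
      norm_num [μ11, X11, Matrix.cons_val_two, Matrix.cons_val_three]

/-- the injective security `(0,1,2,3)` is non-separable at the
prior `(1/8, 3/8, 3/8, 1/8)` with value `3/2`, under a fine-join structure. -/
theorem zeroOneTwoThree_nonseparable :
    (∀ i, IsPartitionFun (C11 i)) ∧ FineJoin C11 ∧ IsPrior μ11 ∧
    (∀ (i : Fin 2) (ω : Fin 4), condExp μ11 X11 (C11 i ω) = 3 / 2) ∧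
    NonSeparableAt C11 X11 μ11 (3 / 2) ∧ Function.Injective X11 := by
  refine ⟨fun i => ?_, fineJoin_C11, isPrior_μ11, condExp_C11, ?_, strictMono_X11.injective⟩
  · rw [C11_eq_binaryPartition]
    fin_cases i <;> exact isPartitionFun_binaryPartition _
  · exact nonSeparableAt_of_forall_condExp_eq (ω₀ := 0) (by norm_num [suppSet, μ11])
      (by norm_num [X11]) condExp_C11
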